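/- arXiv:1505.06595 — 2 statements merged into one kernel-verified Lean document; each statement's English description precedes it below -/
import Mathlib

section
/- Let (G, +) be an abelian group and φ an automorphism of G. For every b ∈ G, the orbit of b under the subgroup of the permutation group of G generated by the left translations L_a : x ↦ a − φ(a) + φ(x) of the affine quandle Aff(G, φ) equals the coset b + {x − φ(x) : x ∈ G} of the range of the additive endomorphism id − φ. -/
/-!
Every generator `L_a` moves `x` by `(a - x) - φ (a - x)`, an element of `H = range (id - φ)`, and
the permutations moving every point within its `H`-coset form a subgroup; so the orbit of `b`
lies in `b + H`. Conversely `L_{b + x}` sends `b` to `b + (x - φ x)`.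
-/

/-- The left translation `x ↦ a - φ a + φ x` of the affine quandle `Aff(G, φ)`,
as a permutation of `G`. -/
def affTrans {G : Type*} [AddCommGroup G] (φ : G ≃+ G) (a : G) : Equiv.Perm G :=
  φ.toEquiv.trans (Equiv.addLeft (a - φ a))

lemma affTrans_apply {G : Type*} [AddCommGroup G] (φ : G ≃+ G) (a x : G) :
    affTrans φ a x = a - φ a + φ x := rfl

namespace AddSubgroup

variable {G : Type*} [AddCommGroup G]

def cosetPreservingPerm (H : AddSubgroup G) : Subgroup (Equiv.Perm G) where
  carrier := {g | ∀ x, g x - x ∈ H}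
  one_mem' x := by simp
  mul_mem' {g h} hg hh x := by
    simpa only [Equiv.Perm.mul_apply, sub_add_sub_cancel] using H.add_mem (hg (h x)) (hh x)
  inv_mem' {g} hg x := by
    simpa only [Equiv.Perm.coe_inv, Equiv.apply_symm_apply, neg_sub] using H.neg_mem (hg (g⁻¹ x))

end AddSubgroup

section affTrans

variable {G : Type*} [AddCommGroup G] (φ : G ≃+ G)

lemma affTrans_apply_sub (a x : G) : affTrans φ a x - x = (a - x) - φ (a - x) := by
  rw [affTrans_apply, map_sub]
  abel

lemma affTrans_mem_cosetPreservingPerm (a : G) :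
    affTrans φ a ∈ (AddMonoidHom.id G - (φ : G →+ G)).range.cosetPreservingPerm :=
  fun x => ⟨a - x, (affTrans_apply_sub φ a x).symm⟩

lemma closure_range_affTrans_le :
    Subgroup.closure (Set.range (affTrans φ)) ≤
      (AddMonoidHom.id G - (φ : G →+ G)).range.cosetPreservingPerm :=
  (Subgroup.closure_le _).2 <| Set.range_subset_iff.2 (affTrans_mem_cosetPreservingPerm φ)

lemma affTrans_add_apply (b x : G) : affTrans φ (b + x) b = b + (x - φ x) := by
  rw [affTrans_apply, map_add]
  abel

end affTrans

/-- for every `b ∈ G`, the orbit of `b` under the subgroup of the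
permutation group of `G` generated by the left translations of the affine
quandle `Aff(G, φ)` equals the coset `b + {x - φ x : x ∈ G}` of the range of
the additive endomorphism `id - φ`. -/
theorem affine_orbit {G : Type*} [AddCommGroup G] (φ : G ≃+ G) (b : G) :
    {c : G | ∃ g ∈ Subgroup.closure (Set.range (affTrans φ)), g b = c} =
      {c : G | ∃ x : G, c = b + (x - φ x)} := by
  ext c
  constructor
  · rintro ⟨g, hg, rfl⟩
    obtain ⟨x, hx⟩ := closure_range_affTrans_le φ hg b
    simp only [AddMonoidHom.sub_apply, AddMonoidHom.id_apply, AddMonoidHom.coe_coe] at hx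
    exact ⟨x, eq_add_of_sub_eq' hx.symm⟩
  · rintro ⟨x, rfl⟩
    exact ⟨affTrans φ (b + x), Subgroup.subset_closure ⟨_, rfl⟩, affTrans_add_apply φ b x⟩
end

section
/- Symmetry breaking for coloring counts: let Q be a finite connected quandle, (A, T) a crossing system with A finite, and a₁ ∈ A. Then for all c, d ∈ Q, the number of Q-colorings f of (A, T) with f(a₁) = c equals the number of Q-colorings with f(a₁) = d; consequently, the total number of Q-colorings of (A, T) equals |Q| times the number of Q-colorings with f(a₁) = c, for any fixed c ∈ Q. The same equalities hold with 'Q-coloring' replaced by 'non-trivial Q-coloring' throughout. -/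
/-- A quandle structure on a type: idempotent, bijective left translations,
left self-distributive. -/
structure IsQuandle {Q : Type*} (op : Q → Q → Q) : Prop where
  idem : ∀ a, op a a = a
  leftBij : ∀ a, Function.Bijective fun x => op a x
  selfDistrib : ∀ a b c, op a (op b c) = op (op a b) (op a c)

/-- A `Q`-coloring of the crossing system `(A, T)`. -/
def IsColoring {A Q : Type*} (T : Set (A × A × A)) (op : Q → Q → Q) (f : A → Q) : Prop :=
  ∀ t ∈ T, op (f t.1) (f t.2.1) = f t.2.2

/-!
Self-distributivity says exactly that every left translation is an automorphism of `op`, so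
the inner automorphism group acts on colorings by post-composition, preserving (non-)triviality.
Post-composing with an automorphism sending `c` to `d` matches the colorings with `f a₁ = c`
bijectively with those with `f a₁ = d`; connectedness provides such an automorphism for all
`c, d`, so the `|Q|` fibres of `f ↦ f a₁` all have the same size.
-/

section Counting

variable {A Q G : Type*} [Group G] [MulAction G Q]

theorem Nat.card_subtype_and_apply_eq_smul (P : (A → Q) → Prop) (g : G)
    (hP : ∀ f, P f ↔ P (g • f)) (a : A) (c : Q) :
    Nat.card {f : A → Q // P f ∧ f a = c} = Nat.card {f : A → Q // P f ∧ f a = g • c} :=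
  Nat.card_congr <| (MulAction.toPerm g).subtypeEquiv fun f => by
    rw [MulAction.toPerm_apply, Pi.smul_apply, smul_left_cancel_iff, hP f]

theorem Nat.card_subtype_eq_sum_apply_eq [Finite A] [Fintype Q] (P : (A → Q) → Prop) (a : A) :
    Nat.card {f : A → Q // P f} = ∑ c, Nat.card {f : A → Q // P f ∧ f a = c} := by
  rw [← Nat.card_congr (Equiv.sigmaFiberEquiv fun f : {f // P f} => f.1 a), Nat.card_sigma]
  exact Finset.sum_congr rfl fun c _ =>
    Nat.card_congr (Equiv.subtypeSubtypeEquivSubtypeInter P fun f => f a = c)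

variable [MulAction.IsPretransitive G Q] (P : (A → Q) → Prop) (hP : ∀ (g : G) f, P f → P (g • f))
include hP

theorem Nat.card_subtype_and_apply_eq_of_isPretransitive (a : A) (c d : Q) :
    Nat.card {f : A → Q // P f ∧ f a = c} = Nat.card {f : A → Q // P f ∧ f a = d} := by
  obtain ⟨g, rfl⟩ := MulAction.exists_smul_eq G c d
  refine Nat.card_subtype_and_apply_eq_smul P g (fun f => ⟨hP g f, fun hgf => ?_⟩) a c
  simpa using hP g⁻¹ _ hgf

theorem Nat.card_subtype_eq_card_mul_of_isPretransitive [Finite A] [Fintype Q] (a : A) (c : Q) :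
    Nat.card {f : A → Q // P f} = Fintype.card Q * Nat.card {f : A → Q // P f ∧ f a = c} := by
  rw [Nat.card_subtype_eq_sum_apply_eq P a,
    Finset.sum_congr rfl fun d _ => card_subtype_and_apply_eq_of_isPretransitive P hP a d c,
    Finset.sum_const, Finset.card_univ, smul_eq_mul]

end Counting

section Quandle

variable {Q : Type*} (op : Q → Q → Q)

def autSubgroup : Subgroup (Equiv.Perm Q) where
  carrier := {e | ∀ x y, e (op x y) = op (e x) (e y)}
  mul_mem' {e e'} he he' x y := by
    rw [Equiv.Perm.mul_apply, he' x y, he, Equiv.Perm.mul_apply, Equiv.Perm.mul_apply]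
  one_mem' _ _ := rfl
  inv_mem' {e} he x y := e.injective <| by
    rw [he (e⁻¹ x) (e⁻¹ y)]
    simp only [Equiv.Perm.coe_inv, Equiv.apply_symm_apply]

variable {op}

theorem closure_leftTranslations_le_autSubgroup
    (h : ∀ a b c, op a (op b c) = op (op a b) (op a c)) :
    Subgroup.closure {e : Equiv.Perm Q | ∃ a, ∀ x, e x = op a x} ≤ autSubgroup op :=
  (Subgroup.closure_le _).2 fun e ⟨a, ha⟩ x y => by rw [ha, ha, ha, h]

theorem IsColoring.comp_autSubgroup {A : Type*} {T : Set (A × A × A)} {f : A → Q}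
    (hf : IsColoring T op f) {g : Equiv.Perm Q} (hg : g ∈ autSubgroup op) :
    IsColoring T op (g ∘ f) := fun t ht => by
  rw [Function.comp_apply, Function.comp_apply, ← hg, hf t ht, Function.comp_apply]

end Quandle

/-- symmetry breaking for coloring counts over a finite connected
quandle `Q`: for all colors `c, d`, the numbers of (`non-trivial`) colorings
with prescribed color `c`, resp. `d`, of a fixed arc `a₁` agree, and the total
number of (non-trivial) colorings is `|Q|` times the number of those with
`f a₁ = c`. -/
theorem symmetry_breaking {Q : Type} [Fintype Q] (op : Q → Q → Q) (hQ : IsQuandle op)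
    (hconn : ∀ b c : Q,
      ∃ g ∈ Subgroup.closure {e : Equiv.Perm Q | ∃ a, ∀ x, e x = op a x}, g b = c)
    {A : Type} [Fintype A] (T : Set (A × A × A)) (a₁ : A) :
    (∀ c d : Q,
      Nat.card {f : A → Q // IsColoring T op f ∧ f a₁ = c} =
        Nat.card {f : A → Q // IsColoring T op f ∧ f a₁ = d}) ∧
    (∀ c : Q,
      Nat.card {f : A → Q // IsColoring T op f} =
        Fintype.card Q * Nat.card {f : A → Q // IsColoring T op f ∧ f a₁ = c}) ∧
    (∀ c d : Q,
      Nat.card {f : A → Q // IsColoring T op f ∧ (∃ a b, f a ≠ f b) ∧ f a₁ = c} =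
        Nat.card {f : A → Q // IsColoring T op f ∧ (∃ a b, f a ≠ f b) ∧ f a₁ = d}) ∧
    (∀ c : Q,
      Nat.card {f : A → Q // IsColoring T op f ∧ (∃ a b, f a ≠ f b)} =
        Fintype.card Q *
          Nat.card {f : A → Q // IsColoring T op f ∧ (∃ a b, f a ≠ f b) ∧ f a₁ = c}) := by
  set H := Subgroup.closure {e : Equiv.Perm Q | ∃ a, ∀ x, e x = op a x}
  have : MulAction.IsPretransitive H Q :=
    ⟨fun b c => let ⟨g, hg, hgb⟩ := hconn b c; ⟨⟨g, hg⟩, hgb⟩⟩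
  have hH : H ≤ autSubgroup op := closure_leftTranslations_le_autSubgroup hQ.selfDistrib
  have hcol : ∀ (g : H) f, IsColoring T op f → IsColoring T op (g • f) :=
    fun g _ hf => hf.comp_autSubgroup (hH g.2)
  have hnontriv : ∀ (g : H) (f : A → Q), (IsColoring T op f ∧ ∃ a b, f a ≠ f b) →
      IsColoring T op (g • f) ∧ ∃ a b, (g • f) a ≠ (g • f) b :=
    fun g f ⟨hf, a, b, hab⟩ => ⟨hcol g f hf, a, b, (MulAction.injective g).ne hab⟩
  refine ⟨Nat.card_subtype_and_apply_eq_of_isPretransitive _ hcol a₁,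
    Nat.card_subtype_eq_card_mul_of_isPretransitive _ hcol a₁, ?_, ?_⟩ <;>
    simp only [← and_assoc]
  · exact Nat.card_subtype_and_apply_eq_of_isPretransitive _ hnontriv a₁
  · exact Nat.card_subtype_eq_card_mul_of_isPretransitive _ hnontriv a₁
end
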